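/- Let U₁, U₂ ∈ ℝ^{n×d} be semi-orthogonal, let Λⱼ = diag(λ_{j,1},…,λ_{j,d}) (j = 1,2) have nonnegative entries with λ_{j,1} the largest, let σ² > 0, set Σⱼ = UⱼΛⱼUⱼᵀ + σ²·Iₙ, and define the Bhattacharyya exponent K = (1/2)·log det((Σ₁+Σ₂)/2) − (1/4)·(log det Σ₁ + log det Σ₂). Let D = (U₁Λ₁U₁ᵀ + U₂Λ₂U₂ᵀ)/(2σ²) and assume every eigenvalue of D is at most 1. Then K ≥ (1/σ⁴)·(c₃ − (1/8)·λ_{1,1}·λ_{2,1}·trace(U₁ᵀU₂U₂ᵀU₁)), where c₃ = (σ⁴/4)·[ Σᵢ λ_{1,i}/σ² − Σᵢ (λ_{1,i}/(2σ²))² − Σᵢ log(1 + λ_{1,i}/σ²) ] + (σ⁴/4)·[ Σᵢ λ_{2,i}/σ² − Σᵢ (λ_{2,i}/(2σ²))² − Σᵢ log(1 + λ_{2,i}/σ²) ]. -/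

import Mathlib

open Matrix

/-! With `Aⱼ = UⱼΛⱼUⱼᵀ` and `M = (A₁ + A₂)/(2σ²) ⪰ 0`, the Weinstein–Aronszajn identity gives
`log det Σⱼ = n log σ² + ∑ᵢ log (1 + λⱼᵢ/σ²)`, while `(Σ₁ + Σ₂)/2 = σ² (I + M)`.  Applying
`log (1 + x) ≥ x - x²/2` to the eigenvalues of `M` bounds `log det (I + M)` below by
`tr M - tr M²/2`.  Both traces are explicit in the `λ`'s except for the cross term
`tr (A₁A₂) = ∑ᵢⱼ λ₁ᵢ λ₂ⱼ (U₁ᵀU₂)ᵢⱼ²`, which is at most `λ₁₁ λ₂₁ tr (U₁ᵀU₂U₂ᵀU₁)`. -/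

theorem Real.sub_sq_div_two_le_log_one_add {x : ℝ} (hx : 0 ≤ x) :
    x - x ^ 2 / 2 ≤ Real.log (1 + x) := by
  refine le_trans ?_ (Real.le_log_one_add_of_nonneg hx)
  rw [le_div_iff₀ (by linarith)]
  nlinarith [pow_nonneg hx 3]

namespace Matrix

section Conj
variable {n R : Type*} [Fintype n] [DecidableEq n] [CommRing R] [StarRing R]

theorem trace_conjStarAlgAut (u : unitary (Matrix n n R)) (x : Matrix n n R) :
    (Unitary.conjStarAlgAut R _ u x).trace = x.trace := by
  rw [Unitary.conjStarAlgAut_apply, trace_mul_cycle, Unitary.coe_star_mul_self, one_mul]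

theorem det_conjStarAlgAut (u : unitary (Matrix n n R)) (x : Matrix n n R) :
    (Unitary.conjStarAlgAut R _ u x).det = x.det := by
  rw [Unitary.conjStarAlgAut_apply, det_mul, det_mul, mul_right_comm, ← det_mul,
    ← Unitary.coe_star, Unitary.coe_mul_star_self, det_one, one_mul]

end Conj

namespace IsHermitian
variable {n 𝕜 : Type*} [Fintype n] [DecidableEq n] [RCLike 𝕜] {A : Matrix n n 𝕜}

theorem det_one_add (hA : A.IsHermitian) :
    (1 + A).det = ∏ i, (1 + (hA.eigenvalues i : 𝕜)) := by
  rw [← det_conjStarAlgAut (star hA.eigenvectorUnitary), map_add, map_one,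
    hA.conjStarAlgAut_star_eigenvectorUnitary, ← diagonal_one, diagonal_add, det_diagonal]
  rfl

theorem trace_mul_self (hA : A.IsHermitian) :
    (A * A).trace = ∑ i, (hA.eigenvalues i : 𝕜) ^ 2 := by
  rw [← trace_conjStarAlgAut (star hA.eigenvectorUnitary), map_mul,
    hA.conjStarAlgAut_star_eigenvectorUnitary, diagonal_mul_diagonal, trace_diagonal]
  simp [sq]

end IsHermitian

theorem PosSemidef.trace_sub_trace_mul_self_div_two_le_log_det_one_add {n : Type*} [Fintype n]
    [DecidableEq n] {A : Matrix n n ℝ} (hA : A.PosSemidef) :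
    A.trace - (A * A).trace / 2 ≤ Real.log (1 + A).det := by
  have hpos : ∀ i, 0 < 1 + hA.isHermitian.eigenvalues i := fun i => by
    linarith [hA.eigenvalues_nonneg i]
  rw [hA.isHermitian.det_one_add, hA.isHermitian.trace_eq_sum_eigenvalues,
    hA.isHermitian.trace_mul_self]
  simp only [RCLike.ofReal_real_eq_id, id_eq]
  rw [Real.log_prod fun i _ => (hpos i).ne', Finset.sum_div, ← Finset.sum_sub_distrib]
  exact Finset.sum_le_sum fun i _ => Real.sub_sq_div_two_le_log_one_add (hA.eigenvalues_nonneg i)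

section Spiked
variable {m r : Type*} [Fintype m] [Fintype r] [DecidableEq r]

theorem det_mul_diagonal_mul_transpose_add_smul_one [DecidableEq m] {𝕜 : Type*} [Field 𝕜]
    {U : Matrix m r 𝕜} (hU : Uᵀ * U = 1) (l : r → 𝕜) {s : 𝕜} (hs : s ≠ 0) :
    (U * diagonal l * Uᵀ + s • 1).det = s ^ Fintype.card m * ∏ i, (1 + l i / s) := by
  have hfactor :
      U * diagonal l * Uᵀ + s • 1 = s • (1 + U * (diagonal (fun i => l i / s) * Uᵀ)) := by
    have hl : (s • fun i => l i / s) = l := funext fun i => mul_div_cancel₀ (l i) hs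
    rw [smul_add, ← Matrix.mul_smul, ← Matrix.smul_mul, ← diagonal_smul, hl, ← Matrix.mul_assoc,
      add_comm]
  rw [hfactor, det_smul, det_one_add_mul_comm, Matrix.mul_assoc, hU, Matrix.mul_one,
    ← diagonal_one, diagonal_add, det_diagonal]

theorem log_det_mul_diagonal_mul_transpose_add_smul_one [DecidableEq m] {U : Matrix m r ℝ}
    (hU : Uᵀ * U = 1) {l : r → ℝ} (hl : ∀ i, 0 ≤ l i) {s : ℝ} (hs : 0 < s) :
    Real.log (U * diagonal l * Uᵀ + s • 1).det =
      Fintype.card m * Real.log s + ∑ i, Real.log (1 + l i / s) := by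
  have hpos : ∀ i, 0 < 1 + l i / s := fun i => by have := hl i; positivity
  rw [det_mul_diagonal_mul_transpose_add_smul_one hU l hs.ne',
    Real.log_mul (by positivity) (Finset.prod_pos fun i _ => hpos i).ne', Real.log_pow,
    Real.log_prod fun i _ => (hpos i).ne']

variable {R : Type*} [CommRing R]

theorem posSemidef_mul_diagonal_mul_transpose [PartialOrder R] [StarRing R] [StarOrderedRing R]
    [TrivialStar R] (U : Matrix m r R) {l : r → R} (hl : ∀ i, 0 ≤ l i) :
    (U * diagonal l * Uᵀ).PosSemidef := by
  simpa only [conjTranspose_eq_transpose_of_trivial] using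
    (posSemidef_diagonal_iff.mpr hl).mul_mul_conjTranspose_same U

theorem trace_mul_diagonal_mul_transpose {U : Matrix m r R} (hU : Uᵀ * U = 1) (l : r → R) :
    (U * diagonal l * Uᵀ).trace = ∑ i, l i := by
  rw [trace_mul_cycle, hU, one_mul, trace_diagonal]

theorem mul_diagonal_mul_transpose_mul_self {U : Matrix m r R} (hU : Uᵀ * U = 1) (a b : r → R) :
    U * diagonal a * Uᵀ * (U * diagonal b * Uᵀ) = U * diagonal (a * b) * Uᵀ := by
  simp only [Matrix.mul_assoc]
  rw [← Matrix.mul_assoc Uᵀ, hU, Matrix.one_mul, ← Matrix.mul_assoc (diagonal a),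
    diagonal_mul_diagonal]
  rfl

theorem trace_add_mul_self_mul_diagonal_mul_transpose {e : Type*} [Fintype e] [DecidableEq e]
    {U : Matrix m r R} {V : Matrix m e R} (hU : Uᵀ * U = 1) (hV : Vᵀ * V = 1) (a : r → R)
    (b : e → R) :
    ((U * diagonal a * Uᵀ + V * diagonal b * Vᵀ) *
        (U * diagonal a * Uᵀ + V * diagonal b * Vᵀ)).trace =
      ∑ i, a i ^ 2 + ∑ j, b j ^ 2 + 2 * (U * diagonal a * Uᵀ * (V * diagonal b * Vᵀ)).trace := by
  rw [Matrix.add_mul, Matrix.mul_add, Matrix.mul_add, trace_add, trace_add, trace_add,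
    trace_mul_comm (V * _ * _), mul_diagonal_mul_transpose_mul_self hU,
    mul_diagonal_mul_transpose_mul_self hV, trace_mul_diagonal_mul_transpose hU,
    trace_mul_diagonal_mul_transpose hV]
  simp only [Pi.mul_apply, ← sq]
  ring

theorem trace_mul_diagonal_mul_transpose_mul {e : Type*} [Fintype e] [DecidableEq e]
    (U : Matrix m r R) (V : Matrix m e R) (a : r → R) (b : e → R) :
    (U * diagonal a * Uᵀ * (V * diagonal b * Vᵀ)).trace =
      ∑ i, ∑ j, a i * b j * (Uᵀ * V) i j ^ 2 := by
  have hcycle : (U * diagonal a * Uᵀ * (V * diagonal b * Vᵀ)).trace =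
      (diagonal a * (Uᵀ * V) * diagonal b * (Uᵀ * V)ᵀ).trace := by
    rw [transpose_mul, transpose_transpose]
    simp only [Matrix.mul_assoc]
    rw [trace_mul_comm U]
    simp only [Matrix.mul_assoc]
  rw [hcycle, trace]
  refine Finset.sum_congr rfl fun i _ => ?_
  rw [diag_apply, mul_apply]
  refine Finset.sum_congr rfl fun j _ => ?_
  rw [mul_diagonal, diagonal_mul, transpose_apply]
  ring

theorem trace_mul_diagonal_mul_transpose_mul_le [LinearOrder R] [IsStrictOrderedRing R]
    {e : Type*} [Fintype e] [DecidableEq e] (U : Matrix m r R) (V : Matrix m e R)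
    {a : r → R} {b : e → R}
    {α β : R} (ha₀ : ∀ i, 0 ≤ a i) (ha : ∀ i, a i ≤ α) (hb₀ : ∀ j, 0 ≤ b j) (hb : ∀ j, b j ≤ β) :
    (U * diagonal a * Uᵀ * (V * diagonal b * Vᵀ)).trace ≤ α * β * (Uᵀ * V * Vᵀ * U).trace := by
  have hsq : (Uᵀ * V * Vᵀ * U).trace = ∑ i, ∑ j, (Uᵀ * V) i j ^ 2 := by
    rw [Matrix.mul_assoc, show Vᵀ * U = (Uᵀ * V)ᵀ by rw [transpose_mul, transpose_transpose]]
    simp only [trace, diag_apply, mul_apply, transpose_apply, sq]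
  rw [trace_mul_diagonal_mul_transpose_mul, hsq, Finset.mul_sum]
  refine Finset.sum_le_sum fun i _ => ?_
  rw [Finset.mul_sum]
  refine Finset.sum_le_sum fun j _ => ?_
  exact mul_le_mul_of_nonneg_right
    (mul_le_mul (ha i) (hb j) (hb₀ j) ((ha₀ i).trans (ha i))) (sq_nonneg _)

end Spiked

theorem log_det_mean_add_smul_one {n : Type*} [Fintype n] [DecidableEq n]
    {A₁ A₂ : Matrix n n ℝ} (hA₁ : A₁.PosSemidef) (hA₂ : A₂.PosSemidef) {s : ℝ} (hs : 0 < s) :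
    Real.log ((2 : ℝ)⁻¹ • (A₁ + s • 1 + (A₂ + s • 1))).det =
      Fintype.card n * Real.log s + Real.log (1 + (2 * s)⁻¹ • (A₁ + A₂)).det := by
  have hmean : (2 : ℝ)⁻¹ • (A₁ + s • 1 + (A₂ + s • 1)) = s • (1 + (2 * s)⁻¹ • (A₁ + A₂)) := by
    simp only [smul_add, smul_smul]
    field_simp
    module
  have hM : ((2 * s)⁻¹ • (A₁ + A₂)).PosSemidef := (hA₁.add hA₂).smul (by positivity)
  have hpos := (PosDef.one.add_posSemidef hM).det_pos
  rw [hmean, det_smul, Real.log_mul (by positivity) hpos.ne', Real.log_pow]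

end Matrix

/-- Here `s` stands for the noise variance `σ²`. -/
theorem stmt_10_general {n d : ℕ} (U₁ U₂ : Matrix (Fin n) (Fin (d + 1)) ℝ)
    (hU₁ : U₁ᵀ * U₁ = 1) (hU₂ : U₂ᵀ * U₂ = 1)
    (l₁ l₂ : Fin (d + 1) → ℝ)
    (hl₁0 : ∀ i, 0 ≤ l₁ i) (hl₂0 : ∀ i, 0 ≤ l₂ i)
    (hl₁max : ∀ i, l₁ i ≤ l₁ 0) (hl₂max : ∀ i, l₂ i ≤ l₂ 0)
    (s : ℝ) (hs : 0 < s)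
    (S₁ S₂ : Matrix (Fin n) (Fin n) ℝ)
    (hS₁ : S₁ = U₁ * Matrix.diagonal l₁ * U₁ᵀ + s • 1)
    (hS₂ : S₂ = U₂ * Matrix.diagonal l₂ * U₂ᵀ + s • 1)
    (K c₃ : ℝ)
    (hK : K = (1 / 2) * Real.log ((((2:ℝ)⁻¹) • (S₁ + S₂)).det) -
        (1 / 4) * (Real.log S₁.det + Real.log S₂.det))
    (hc₃ : c₃ =
        (s ^ 2 / 4) * ((∑ i, l₁ i / s) - (∑ i, (l₁ i / (2 * s)) ^ 2) -
            ∑ i, Real.log (1 + l₁ i / s)) +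
        (s ^ 2 / 4) * ((∑ i, l₂ i / s) - (∑ i, (l₂ i / (2 * s)) ^ 2) -
            ∑ i, Real.log (1 + l₂ i / s))) :
    K ≥ (1 / s ^ 2) *
        (c₃ - (1 / 8) * l₁ 0 * l₂ 0 * (U₁ᵀ * U₂ * U₂ᵀ * U₁).trace) := by
  subst hS₁ hS₂ hK hc₃
  set A₁ := U₁ * diagonal l₁ * U₁ᵀ
  set A₂ := U₂ * diagonal l₂ * U₂ᵀ
  have hA₁ : A₁.PosSemidef := posSemidef_mul_diagonal_mul_transpose U₁ hl₁0
  have hA₂ : A₂.PosSemidef := posSemidef_mul_diagonal_mul_transpose U₂ hl₂0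
  have htr : ((2 * s)⁻¹ • (A₁ + A₂)).trace = (2 * s)⁻¹ * (∑ i, l₁ i + ∑ i, l₂ i) := by
    rw [trace_smul, trace_add, trace_mul_diagonal_mul_transpose hU₁,
      trace_mul_diagonal_mul_transpose hU₂, smul_eq_mul]
  have htr_sq : ((2 * s)⁻¹ • (A₁ + A₂) * ((2 * s)⁻¹ • (A₁ + A₂))).trace =
      (2 * s)⁻¹ ^ 2 * (∑ i, l₁ i ^ 2 + ∑ i, l₂ i ^ 2 + 2 * (A₁ * A₂).trace) := by
    rw [smul_mul_smul, trace_smul, trace_add_mul_self_mul_diagonal_mul_transpose hU₁ hU₂,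
      smul_eq_mul, ← sq]
  have hcross : (A₁ * A₂).trace ≤ l₁ 0 * l₂ 0 * (U₁ᵀ * U₂ * U₂ᵀ * U₁).trace :=
    trace_mul_diagonal_mul_transpose_mul_le U₁ U₂ hl₁0 hl₁max hl₂0 hl₂max
  have hM : ((2 * s)⁻¹ • (A₁ + A₂)).PosSemidef := (hA₁.add hA₂).smul (by positivity)
  have hlog := hM.trace_sub_trace_mul_self_div_two_le_log_det_one_add
  rw [htr, htr_sq] at hlog
  rw [log_det_mean_add_smul_one hA₁ hA₂ hs,
    log_det_mul_diagonal_mul_transpose_add_smul_one hU₁ hl₁0 hs,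
    log_det_mul_diagonal_mul_transpose_add_smul_one hU₂ hl₂0 hs]
  simp_rw [div_pow, ← Finset.sum_div]
  field_simp at hlog ⊢
  linarith

/-- Low-SNR lower bound on the Bhattacharyya exponent `K`.  Here `s` plays the
role of the noise variance `σ²` and `l₁ 0` (resp. `l₂ 0`) is the largest
eigenvalue of `Λ₁` (resp. `Λ₂`). -/
theorem stmt_10 {n d : ℕ} (U₁ U₂ : Matrix (Fin n) (Fin (d + 1)) ℝ)
    (hU₁ : U₁ᵀ * U₁ = 1) (hU₂ : U₂ᵀ * U₂ = 1)
    (l₁ l₂ : Fin (d + 1) → ℝ)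
    (hl₁0 : ∀ i, 0 ≤ l₁ i) (hl₂0 : ∀ i, 0 ≤ l₂ i)
    (hl₁max : ∀ i, l₁ i ≤ l₁ 0) (hl₂max : ∀ i, l₂ i ≤ l₂ 0)
    (s : ℝ) (hs : 0 < s)
    (S₁ S₂ D : Matrix (Fin n) (Fin n) ℝ)
    (hS₁ : S₁ = U₁ * Matrix.diagonal l₁ * U₁ᵀ + s • 1)
    (hS₂ : S₂ = U₂ * Matrix.diagonal l₂ * U₂ᵀ + s • 1)
    (hD : D = (2 * s)⁻¹ • (U₁ * Matrix.diagonal l₁ * U₁ᵀ + U₂ * Matrix.diagonal l₂ * U₂ᵀ))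
    (hDh : D.IsHermitian) (hDeig : ∀ i, hDh.eigenvalues i ≤ 1)
    (K c₃ : ℝ)
    (hK : K = (1 / 2) * Real.log ((((2:ℝ)⁻¹) • (S₁ + S₂)).det) -
        (1 / 4) * (Real.log S₁.det + Real.log S₂.det))
    (hc₃ : c₃ =
        (s ^ 2 / 4) * ((∑ i, l₁ i / s) - (∑ i, (l₁ i / (2 * s)) ^ 2) -
            ∑ i, Real.log (1 + l₁ i / s)) +
        (s ^ 2 / 4) * ((∑ i, l₂ i / s) - (∑ i, (l₂ i / (2 * s)) ^ 2) -
            ∑ i, Real.log (1 + l₂ i / s))) :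
    K ≥ (1 / s ^ 2) *
        (c₃ - (1 / 8) * l₁ 0 * l₂ 0 * (U₁ᵀ * U₂ * U₂ᵀ * U₁).trace) :=
  stmt_10_general U₁ U₂ hU₁ hU₂ l₁ l₂ hl₁0 hl₂0 hl₁max hl₂max s hs S₁ S₂ hS₁ hS₂ K c₃ hK hc₃
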